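/- arXiv:0909.4129 — 2 statements merged into one kernel-verified Lean document; each statement's English description precedes it below -/
import Mathlib

section
/- For all real numbers δ > 0 and c > 0, let d₁ = δ⁻¹·log(1+δc) and d₂ = e^{-c}/(1+δc). Then the acceptance rate R_B(δ; c) = (∫₀^∞ e^{-x}(1+δx)^{-1} dx) / (d₁ + d₂) satisfies R_B(δ; c) ≥ (e^c + c⁻¹)^{-1}. -/
/-! On `(0, c]` the integrand `e^{-x} (1 + δx)⁻¹` dominates both `e^{-c} (1 + δx)⁻¹` and the
constant `e^{-c} / (1 + δc)`, so the full integral `I` satisfies `e^{-c} d₁ ≤ I` and `c d₂ ≤ I`.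
Hence `d₁ + d₂ ≤ (e^c + c⁻¹) I`. -/

open MeasureTheory Real Set

lemma intervalIntegral_le_setIntegral_Ioi {f : ℝ → ℝ} {a b : ℝ} (hab : a ≤ b)
    (hf : IntegrableOn f (Ioi a)) (hf₀ : ∀ x ∈ Ioi a, 0 ≤ f x) :
    ∫ x in a..b, f x ≤ ∫ x in Ioi a, f x := by
  rw [intervalIntegral.integral_of_le hab]
  exact setIntegral_mono_set hf ((ae_restrict_mem measurableSet_Ioi).mono hf₀)
    Ioc_subset_Ioi_self.eventuallyLE

lemma inv_inv_add_inv_le_div_add {a b d₁ d₂ I : ℝ} (ha : 0 < a) (hb : 0 < b)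
    (hd : 0 < d₁ + d₂) (h₁ : a * d₁ ≤ I) (h₂ : b * d₂ ≤ I) :
    (a⁻¹ + b⁻¹)⁻¹ ≤ I / (d₁ + d₂) := by
  rw [le_div_iff₀ hd, inv_mul_le_iff₀ (by positivity)]
  have e₁ : d₁ ≤ a⁻¹ * I := by rwa [le_inv_mul_iff₀ ha]
  have e₂ : d₂ ≤ b⁻¹ * I := by rwa [le_inv_mul_iff₀ hb]
  linarith [add_mul a⁻¹ b⁻¹ I]

section

variable {δ c : ℝ}

lemma intervalIntegral_inv_one_add_mul (hδ : δ ≠ 0) (hδc : 0 < 1 + δ * c) :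
    ∫ x in (0:ℝ)..c, (1 + δ * x)⁻¹ = δ⁻¹ * log (1 + δ * c) := by
  simp_rw [add_comm 1 (δ * _)]
  rw [intervalIntegral.integral_comp_mul_add (fun x => x⁻¹) hδ,
    integral_inv_of_pos (by norm_num) (by linarith), mul_zero, zero_add, div_one, smul_eq_mul]

lemma continuousOn_inv_one_add_mul (hδ : 0 ≤ δ) :
    ContinuousOn (fun x => (1 + δ * x)⁻¹) (Ici 0) :=
  ContinuousOn.inv₀ (by fun_prop) fun x (hx : 0 ≤ x) => by positivity

lemma intervalIntegrable_exp_neg_mul_inv_one_add_mul (hδ : 0 ≤ δ) (hc : 0 ≤ c) :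
    IntervalIntegrable (fun x => exp (-x) * (1 + δ * x)⁻¹) volume 0 c :=
  ((continuous_exp.comp continuous_neg).continuousOn.mul (continuousOn_inv_one_add_mul hδ)).mono
    Icc_subset_Ici_self |>.intervalIntegrable_of_Icc hc

lemma integrableOn_exp_neg_mul_inv_one_add_mul (hδ : 0 ≤ δ) :
    IntegrableOn (fun x => exp (-x) * (1 + δ * x)⁻¹) (Ioi 0) := by
  refine (exp_neg_integrableOn_Ioi 0 one_pos).mono' (by fun_prop) ?_
  filter_upwards [ae_restrict_mem measurableSet_Ioi] with x (hx : 0 < x)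
  rw [norm_of_nonneg (by positivity), neg_one_mul]
  exact mul_le_of_le_one_right (exp_pos _).le
    (inv_le_one_of_one_le₀ (le_add_of_nonneg_right (by positivity)))

lemma exp_neg_mul_log_le_intervalIntegral (hδ : 0 < δ) (hc : 0 ≤ c) :
    exp (-c) * (δ⁻¹ * log (1 + δ * c)) ≤ ∫ x in (0:ℝ)..c, exp (-x) * (1 + δ * x)⁻¹ := by
  rw [← intervalIntegral_inv_one_add_mul hδ.ne' (by positivity),
    ← intervalIntegral.integral_const_mul]
  refine intervalIntegral.integral_mono_on hc
    (((continuousOn_inv_one_add_mul hδ.le).mono Icc_subset_Ici_self).intervalIntegrable_of_Icc hc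
      |>.const_mul _)
    (intervalIntegrable_exp_neg_mul_inv_one_add_mul hδ.le hc) fun x hx => ?_
  have := hx.1
  gcongr
  exact hx.2

lemma mul_exp_neg_div_le_intervalIntegral (hδ : 0 ≤ δ) (hc : 0 ≤ c) :
    c * (exp (-c) / (1 + δ * c)) ≤ ∫ x in (0:ℝ)..c, exp (-x) * (1 + δ * x)⁻¹ := by
  rw [show c * (exp (-c) / (1 + δ * c)) = ∫ _ in (0:ℝ)..c, exp (-c) / (1 + δ * c) by
    simp [mul_div_assoc]]
  refine intervalIntegral.integral_mono_on hc intervalIntegrable_const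
    (intervalIntegrable_exp_neg_mul_inv_one_add_mul hδ hc) fun x hx => ?_
  have := hx.1
  rw [div_eq_mul_inv]
  gcongr
  · exact hx.2
  · exact hx.2

end

theorem acceptance_rate_lower_bound (δ c : ℝ) (hδ : 0 < δ) (hc : 0 < c) :
    (∫ x in Set.Ioi (0:ℝ), Real.exp (-x) * (1 + δ * x)⁻¹) /
      (δ⁻¹ * Real.log (1 + δ * c) + Real.exp (-c) / (1 + δ * c)) ≥
    (Real.exp c + c⁻¹)⁻¹ := by
  have hI : ∫ x in (0:ℝ)..c, exp (-x) * (1 + δ * x)⁻¹ ≤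
      ∫ x in Ioi 0, exp (-x) * (1 + δ * x)⁻¹ :=
    intervalIntegral_le_setIntegral_Ioi hc.le (integrableOn_exp_neg_mul_inv_one_add_mul hδ.le)
      fun x (hx : 0 < x) => by positivity
  have hlog : 0 < log (1 + δ * c) := log_pos (lt_add_of_pos_right 1 (mul_pos hδ hc))
  rw [ge_iff_le, ← inv_inv (exp c), ← exp_neg]
  exact inv_inv_add_inv_le_div_add (exp_pos _) hc (by positivity)
    ((exp_neg_mul_log_le_intervalIntegral hδ hc.le).trans hI)
    ((mul_exp_neg_div_le_intervalIntegral hδ.le hc.le).trans hI)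
end

section
/- For all real β > 0, γ > 0, δ ≥ 0, the double integral of f(x,y) = exp(−(βx + γy + δβγxy)) over (0,∞)² equals (βγ)^{-1} · ∫₀^∞ e^{-x}(1+δx)^{-1} dx. Consequently, since ∫₀^∞∫₀^∞ exp(−βx−γy) dx dy = (βγ)^{-1}, the acceptance rate of Algorithm A equals R_A(δ) = ∫₀^∞ e^{-x}(1+δx)^{-1} dx. -/
/-!
For fixed `x > 0` the exponent is affine in `y` with slope `γ (1 + δ β x) > 0`, so the inner
integral is `exp (-β x) / (γ (1 + δ β x))`; the substitution `u = β x` in the outer integral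
produces the remaining factor `β⁻¹`. The envelope integral is the same computation with
`δ = 0`.
-/

open MeasureTheory Real Set

lemma integral_exp_neg_add_mul_Ioi (a : ℝ) {c : ℝ} (hc : 0 < c) :
    ∫ y in Ioi (0:ℝ), exp (-(a + c * y)) = exp (-a) / c := by
  have hexp := integral_exp_mul_Ioi (neg_lt_zero.2 hc) 0
  simp only [mul_zero, exp_zero, neg_mul] at hexp
  simp only [neg_add, exp_add, integral_const_mul, hexp, neg_div_neg_eq, mul_one_div]

lemma integral_comp_mul_left_Ioi_zero (g : ℝ → ℝ) {b : ℝ} (hb : 0 < b) :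
    ∫ x in Ioi (0:ℝ), g (b * x) = b⁻¹ * ∫ x in Ioi (0:ℝ), g x := by
  simpa using integral_comp_mul_left_Ioi g 0 hb

lemma iteratedIntegral_exp_neg_bilinear_Ioi {β γ δ : ℝ} (hβ : 0 < β) (hγ : 0 < γ)
    (hδ : 0 ≤ δ) :
    (∫ x in Ioi (0:ℝ), ∫ y in Ioi (0:ℝ), exp (-(β * x + γ * y + δ * β * γ * x * y))) =
      (β * γ)⁻¹ * ∫ x in Ioi (0:ℝ), exp (-x) * (1 + δ * x)⁻¹ := by
  have inner : ∀ x ∈ Ioi (0:ℝ),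
      ∫ y in Ioi (0:ℝ), exp (-(β * x + γ * y + δ * β * γ * x * y)) =
        γ⁻¹ * (exp (-(β * x)) * (1 + δ * (β * x))⁻¹) := by
    intro x (hx : 0 < x)
    have hc : 0 < γ * (1 + δ * (β * x)) := by positivity
    calc ∫ y in Ioi (0:ℝ), exp (-(β * x + γ * y + δ * β * γ * x * y))
        = ∫ y in Ioi (0:ℝ), exp (-(β * x + γ * (1 + δ * (β * x)) * y)) := by
          congr! 4 with y; ring
      _ = γ⁻¹ * (exp (-(β * x)) * (1 + δ * (β * x))⁻¹) := by
          rw [integral_exp_neg_add_mul_Ioi _ hc, div_eq_mul_inv, mul_inv]; ring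
  rw [setIntegral_congr_fun measurableSet_Ioi inner, integral_const_mul,
    integral_comp_mul_left_Ioi_zero (fun u => exp (-u) * (1 + δ * u)⁻¹) hβ, mul_inv]
  ring

lemma iteratedIntegral_exp_neg_linear_Ioi {β γ : ℝ} (hβ : 0 < β) (hγ : 0 < γ) :
    (∫ x in Ioi (0:ℝ), ∫ y in Ioi (0:ℝ), exp (-β * x - γ * y)) = (β * γ)⁻¹ := by
  have inner : ∀ x ∈ Ioi (0:ℝ),
      ∫ y in Ioi (0:ℝ), exp (-β * x - γ * y) = γ⁻¹ * exp (-(β * x)) := by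
    intro x _
    calc ∫ y in Ioi (0:ℝ), exp (-β * x - γ * y)
        = ∫ y in Ioi (0:ℝ), exp (-(β * x + γ * y)) := by
          simp only [neg_mul, neg_add']
      _ = γ⁻¹ * exp (-(β * x)) := by rw [integral_exp_neg_add_mul_Ioi _ hγ, div_eq_inv_mul]
  rw [setIntegral_congr_fun measurableSet_Ioi inner, integral_const_mul,
    integral_comp_mul_left_Ioi_zero (fun u => exp (-u)) hβ, integral_exp_neg_Ioi_zero, mul_inv]
  ring

theorem double_integral_and_acceptance_rate (β γ δ : ℝ) (hβ : 0 < β) (hγ : 0 < γ)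
    (hδ : 0 ≤ δ) :
    (∫ x in Set.Ioi (0:ℝ), ∫ y in Set.Ioi (0:ℝ),
        Real.exp (-(β * x + γ * y + δ * β * γ * x * y))) =
        (β * γ)⁻¹ * ∫ x in Set.Ioi (0:ℝ), Real.exp (-x) * (1 + δ * x)⁻¹ ∧
      (∫ x in Set.Ioi (0:ℝ), ∫ y in Set.Ioi (0:ℝ), Real.exp (-β * x - γ * y)) =
        (β * γ)⁻¹ ∧
      (∫ x in Set.Ioi (0:ℝ), ∫ y in Set.Ioi (0:ℝ),
          Real.exp (-(β * x + γ * y + δ * β * γ * x * y))) /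
        (∫ x in Set.Ioi (0:ℝ), ∫ y in Set.Ioi (0:ℝ), Real.exp (-β * x - γ * y)) =
        ∫ x in Set.Ioi (0:ℝ), Real.exp (-x) * (1 + δ * x)⁻¹ := by
  have target := iteratedIntegral_exp_neg_bilinear_Ioi hβ hγ hδ
  have envelope := iteratedIntegral_exp_neg_linear_Ioi hβ hγ
  refine ⟨target, envelope, ?_⟩
  rw [target, envelope, mul_div_cancel_left₀ _ (by positivity)]
end
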